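/- Let r: X → ℝ be measurable with e^{−ε} ≤ r ≤ e^{ε} Q-a.e. for a probability measure Q, and ∫ r dQ = 1. Set A = {r ≥ 1}, q = Q(A), m₊ = E_Q[r | A], m₋ = E_Q[r | Aᶜ]. Then (1/2)∫|r − 1| dQ = q(m₊ − 1), and this quantity is maximized, subject to m₊ ∈ [1, e^ε], m₋ ∈ [e^{−ε}, 1], and q·m₊ + (1−q)·m₋ = 1, at m₊ = e^ε, m₋ = e^{−ε}, giving maximum value (e^ε − 1)/(e^ε + 1) = tanh(ε/2). -/

import Mathlib

open MeasureTheory Real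

/-
The set `A = {r ≥ 1}` is the positive part of `r - 1`, and since `r - 1` has integral zero its
positive and negative parts have equal mass; this gives `(1/2) ∫ |r - 1| dQ = ∫_A (r - 1) dQ`,
which is `q (m₊ - 1)`.

For the extremal problem with `E = e^ε`, the constraint `q m₊ + (1 - q) m₋ = 1` makes
`t = q (m₊ - 1)` equal to `(1 - q)(1 - m₋)`, so `t ≤ q (E - 1)` and `E t ≤ (1 - q)(E - 1)`; adding the two bounds
eliminates `q` and gives `(E + 1) t ≤ E - 1`, with equality at `m₊ = E`, `m₋ = E⁻¹`.
-/

section TotalVariation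

variable {X : Type*} [MeasurableSpace X] {μ : Measure X}

theorem integral_abs_eq_two_mul_setIntegral_nonneg {f : X → ℝ} (hfi : Integrable f μ)
    (hf : ∫ x, f x ∂μ = 0) :
    ∫ x, |f x| ∂μ = 2 * ∫ x in {x | 0 ≤ f x}, f x ∂μ := by
  have hs : NullMeasurableSet {x | 0 ≤ f x} μ :=
    aestronglyMeasurable_const.nullMeasurableSet_le hfi.1
  have hsplit : ∫ x in {x | 0 ≤ f x}, f x ∂μ + ∫ x in {x | 0 ≤ f x}ᶜ, f x ∂μ = 0 :=
    (integral_add_compl₀ hs hfi).trans hf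
  have habs_pos : ∫ x in {x | 0 ≤ f x}, |f x| ∂μ = ∫ x in {x | 0 ≤ f x}, f x ∂μ :=
    setIntegral_congr_fun₀ hs fun x hx => abs_of_nonneg hx
  have habs_neg : ∫ x in {x | 0 ≤ f x}ᶜ, |f x| ∂μ = -∫ x in {x | 0 ≤ f x}ᶜ, f x ∂μ := by
    rw [← integral_neg]
    exact setIntegral_congr_fun₀ hs.compl fun x hx => abs_of_neg (not_le.mp hx)
  rw [← integral_add_compl₀ hs hfi.abs, habs_pos, habs_neg]
  linarith

theorem setIntegral_sub_one_eq_measure_mul [IsFiniteMeasure μ] {f : X → ℝ} {s : Set X}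
    (hf : IntegrableOn f s μ) :
    ∫ x in s, (f x - 1) ∂μ = (μ s).toReal * ((∫ x in s, f x ∂μ) / (μ s).toReal - 1) := by
  rw [integral_sub hf (integrable_const 1), setIntegral_const, smul_eq_mul, mul_one,
    ← measureReal_def]
  rcases eq_or_ne (μ s) 0 with hs | hs
  · simp [Measure.restrict_eq_zero.mpr hs, measureReal_def, hs]
  · have : μ.real s ≠ 0 := (measureReal_ne_zero_iff (measure_ne_top μ s)).mpr hs
    field_simp

end TotalVariation

theorem mul_sub_one_le_div_of_mean_eq_one {E q mplus mminus : ℝ} (hE : 0 < E)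
    (hq₀ : 0 ≤ q) (hq₁ : q ≤ 1) (hmplus : mplus ≤ E) (hmminus : E⁻¹ ≤ mminus)
    (hmean : q * mplus + (1 - q) * mminus = 1) :
    q * (mplus - 1) ≤ (E - 1) / (E + 1) := by
  have hbound_plus : q * (mplus - 1) ≤ q * (E - 1) := by gcongr
  have hEmminus : 1 ≤ E * mminus := by rwa [inv_le_iff_one_le_mul₀' hE] at hmminus
  have hbound_minus : E * (q * (mplus - 1)) ≤ (1 - q) * (E - 1) := by
    have : q * (mplus - 1) = (1 - q) * (1 - mminus) := by linarith
    rw [this]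
    nlinarith [mul_le_mul_of_nonneg_left hEmminus (sub_nonneg.mpr hq₁)]
  rw [le_div_iff₀ (by linarith)]
  linarith

theorem Real.tanh_half_eq (x : ℝ) : tanh (x / 2) = (exp x - 1) / (exp x + 1) := by
  have hx : exp x = exp (x / 2) * exp (x / 2) := by rw [← exp_add, add_halves]
  have hpos : 0 < exp (x / 2) := exp_pos _
  rw [tanh_eq, exp_neg, hx]
  field_simp

theorem stmt_4_general {X : Type*} [MeasurableSpace X] (Q : Measure X) [IsProbabilityMeasure Q]
    (r : X → ℝ) (ε : ℝ)
    (hmean : ∫ x, r x ∂Q = 1)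
    (A : Set X) (hA : A = {x | 1 ≤ r x})
    (q mplus : ℝ)
    (hq : q = (Q A).toReal)
    (hmplus : mplus = (∫ x in A, r x ∂Q) / (Q A).toReal) :
    (1 / 2) * ∫ x, |r x - 1| ∂Q = q * (mplus - 1) ∧
    (∀ q' mp mm : ℝ, 0 ≤ q' → q' ≤ 1 →
        1 ≤ mp → mp ≤ Real.exp ε →
        Real.exp (-ε) ≤ mm → mm ≤ 1 →
        q' * mp + (1 - q') * mm = 1 →
        q' * (mp - 1) ≤ (Real.exp ε - 1) / (Real.exp ε + 1)) ∧
    (1 / (Real.exp ε + 1)) * Real.exp ε +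
        (1 - 1 / (Real.exp ε + 1)) * Real.exp (-ε) = 1 ∧
    (1 / (Real.exp ε + 1)) * (Real.exp ε - 1) = (Real.exp ε - 1) / (Real.exp ε + 1) ∧
    (Real.exp ε - 1) / (Real.exp ε + 1) = Real.tanh (ε / 2) := by
  have hint : Integrable r Q := .of_integral_ne_zero (by simp [hmean])
  have hcentered : ∫ x, (r x - 1) ∂Q = 0 := by
    simp [integral_sub hint (integrable_const 1), hmean]
  have hA' : A = {x | 0 ≤ r x - 1} := by simp [hA]
  have hpos : 0 < exp ε := exp_pos ε
  refine ⟨?_, ?_, ?_, one_div_mul_eq_div _ _, (tanh_half_eq ε).symm⟩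
  · rw [integral_abs_eq_two_mul_setIntegral_nonneg (f := fun x => r x - 1)
      (hint.sub (integrable_const 1)) hcentered,
      ← hA', setIntegral_sub_one_eq_measure_mul hint.integrableOn, hq, hmplus]
    ring
  · intro q' mp mm hq₀ hq₁ _ hmp hmm _ hconstraint
    exact mul_sub_one_le_div_of_mean_eq_one hpos hq₀ hq₁ hmp (exp_neg ε ▸ hmm) hconstraint
  · rw [exp_neg]
    field_simp
    ring

theorem stmt_4 {X : Type*} [MeasurableSpace X] (Q : Measure X) [IsProbabilityMeasure Q]
    (r : X → ℝ) (hr : Measurable r) (ε : ℝ) (hε : 0 ≤ ε)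
    (hbounds : ∀ᵐ x ∂Q, Real.exp (-ε) ≤ r x ∧ r x ≤ Real.exp ε)
    (hmean : ∫ x, r x ∂Q = 1)
    (A : Set X) (hA : A = {x | 1 ≤ r x})
    (q mplus mminus : ℝ)
    (hq : q = (Q A).toReal)
    (hmplus : mplus = (∫ x in A, r x ∂Q) / (Q A).toReal)
    (hmminus : mminus = (∫ x in Aᶜ, r x ∂Q) / (Q Aᶜ).toReal) :
    (1 / 2) * ∫ x, |r x - 1| ∂Q = q * (mplus - 1) ∧
    (∀ q' mp mm : ℝ, 0 ≤ q' → q' ≤ 1 →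
        1 ≤ mp → mp ≤ Real.exp ε →
        Real.exp (-ε) ≤ mm → mm ≤ 1 →
        q' * mp + (1 - q') * mm = 1 →
        q' * (mp - 1) ≤ (Real.exp ε - 1) / (Real.exp ε + 1)) ∧
    (1 / (Real.exp ε + 1)) * Real.exp ε +
        (1 - 1 / (Real.exp ε + 1)) * Real.exp (-ε) = 1 ∧
    (1 / (Real.exp ε + 1)) * (Real.exp ε - 1) = (Real.exp ε - 1) / (Real.exp ε + 1) ∧
    (Real.exp ε - 1) / (Real.exp ε + 1) = Real.tanh (ε / 2) :=
  stmt_4_general Q r ε hmean A hA q mplus hq hmplus
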